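/- arXiv:1801.06461 — 3 statements merged into one kernel-verified Lean document; each statement's English description precedes it below -/
import Mathlib

section
/- Let Ω ⊂ ℝⁿ be a bounded open set containing the ball B_R(0) for some R > 0, and let G : Ω×Ω → [0,∞) be measurable with m := inf_{x∈Ω} ∫_{B_R(0)} G(x,y) dy > 0 and M := sup_{x∈Ω} ∫_Ω G(x,y) dy < ∞. Let h : [0,∞) → (0,∞) be nondecreasing, and let a > 0, σ₂ > 0 and λ > 0 satisfy a/(m·h(a)) ≤ λ ≤ σ₂/(M·h(a)). Define v : Ω → ℝ by v = a on B_R(0) and v = 0 on Ω∖B_R(0), and define v₁(x) = λ ∫_Ω G(x,y) h(v(y)) dy. Then 0 ≤ v ≤ v₁ ≤ σ₂ on Ω. -/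
open Real Set MeasureTheory
open scoped ENNReal

/-! Since `v` equals `a` on `B_R(0)` and lies in `[0, a]`, monotonicity of `h` gives
`h ∘ v = h a` on the ball and `h ∘ v ≤ h a` everywhere. Hence
`m · h(a) ≤ ∫_Ω G(x, ·) h(v) ≤ M · h(a)` for every `x ∈ Ω`, and the two ends of the window
for `λ` turn these into `a ≤ v₁(x)` and `v₁(x) ≤ σ₂`; the sandwich itself forces `M ≥ m > 0`,
so the upper end of the window is a genuine bound. -/

section PlateauIntegral

variable {α : Type*} [MeasurableSpace α] {μ : Measure α} {B Ω : Set α} {f φ : α → ℝ≥0∞}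
  {c : ℝ≥0∞}

theorem setLIntegral_mul_const_le_of_eqOn (hBΩ : B ⊆ Ω) (hB : MeasurableSet B)
    (hφ : EqOn φ (fun _ => c) B) (hc : c ≠ ∞) :
    (∫⁻ y in B, f y ∂μ) * c ≤ ∫⁻ y in Ω, f y * φ y ∂μ :=
  calc (∫⁻ y in B, f y ∂μ) * c
      = ∫⁻ y in B, f y * φ y ∂μ := by
        rw [← lintegral_mul_const' c f hc]
        exact setLIntegral_congr_fun hB fun y hy => by rw [hφ hy]
    _ ≤ ∫⁻ y in Ω, f y * φ y ∂μ := lintegral_mono_set hBΩ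

theorem setLIntegral_mul_le_mul_const (hφ : ∀ y, φ y ≤ c) (hc : c ≠ ∞) :
    ∫⁻ y in Ω, f y * φ y ∂μ ≤ (∫⁻ y in Ω, f y ∂μ) * c := by
  rw [← lintegral_mul_const' c f hc]
  exact lintegral_mono fun y => mul_le_mul_right (hφ y) _

theorem ENNReal.toReal_mem_Icc_of_ofReal_le_of_le_ofReal {x : ℝ≥0∞} {p q : ℝ} (hp : 0 < p)
    (hpx : ENNReal.ofReal p ≤ x) (hxq : x ≤ ENNReal.ofReal q) : x.toReal ∈ Icc p q := by
  have hpq : p ≤ q := (ENNReal.ofReal_le_ofReal_iff'.mp (hpx.trans hxq)).resolve_right hp.not_ge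
  exact ⟨(ENNReal.ofReal_le_iff_le_toReal (ne_top_of_le_ne_top ENNReal.ofReal_ne_top hxq)).mp hpx,
    ENNReal.toReal_le_of_le_ofReal (hp.le.trans hpq) hxq⟩

theorem setIntegral_mul_mem_Icc_of_plateau {g ψ : α → ℝ} {m M c : ℝ}
    (hΩ : MeasurableSet Ω) (hB : MeasurableSet B) (hBΩ : B ⊆ Ω)
    (hg : Measurable g) (hψ : Measurable ψ) (hg₀ : ∀ y ∈ Ω, 0 ≤ g y)
    (hψ₀ : ∀ y, 0 ≤ ψ y) (hψc : ∀ y, ψ y ≤ c) (hψB : ∀ y ∈ B, ψ y = c)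
    (hm : 0 < m) (hc : 0 < c)
    (hmB : ENNReal.ofReal m ≤ ∫⁻ y in B, ENNReal.ofReal (g y) ∂μ)
    (hMΩ : ∫⁻ y in Ω, ENNReal.ofReal (g y) ∂μ ≤ ENNReal.ofReal M) :
    ∫ y in Ω, g y * ψ y ∂μ ∈ Icc (m * c) (M * c) := by
  have hsplit : ∀ y, ENNReal.ofReal (g y * ψ y) = ENNReal.ofReal (g y) * ENNReal.ofReal (ψ y) :=
    fun y => ENNReal.ofReal_mul' (hψ₀ y)
  rw [integral_eq_lintegral_of_nonneg_ae
      (ae_restrict_of_forall_mem hΩ fun y hy => mul_nonneg (hg₀ y hy) (hψ₀ y))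
      (hg.mul hψ).aestronglyMeasurable]
  simp only [hsplit]
  refine ENNReal.toReal_mem_Icc_of_ofReal_le_of_le_ofReal (mul_pos hm hc) ?_ ?_
  · rw [ENNReal.ofReal_mul hm.le]
    exact (mul_le_mul_left hmB _).trans <| setLIntegral_mul_const_le_of_eqOn hBΩ hB
      (fun y hy => by rw [hψB y hy]) ENNReal.ofReal_ne_top
  · rw [ENNReal.ofReal_mul' hc.le]
    exact (setLIntegral_mul_le_mul_const (fun y => ENNReal.ofReal_le_ofReal (hψc y))
      ENNReal.ofReal_ne_top).trans (mul_le_mul_left hMΩ _)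

end PlateauIntegral

theorem plateau_subsolution_sandwich_general
    (n : ℕ)
    (Ω : Set (EuclideanSpace ℝ (Fin n))) (hΩo : IsOpen Ω)
    (R : ℝ) (hball : Metric.ball (0 : EuclideanSpace ℝ (Fin n)) R ⊆ Ω)
    (G : EuclideanSpace ℝ (Fin n) → EuclideanSpace ℝ (Fin n) → ℝ)
    (hGmeas : Measurable (Function.uncurry G))
    (hGnonneg : ∀ x ∈ Ω, ∀ y ∈ Ω, 0 ≤ G x y)
    (m M : ℝ) (hm : 0 < m)
    (hminf : ∀ x ∈ Ω, ENNReal.ofReal m ≤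
      ∫⁻ y in Metric.ball (0 : EuclideanSpace ℝ (Fin n)) R,
        ENNReal.ofReal (G x y) ∂volume)
    (hMsup : ∀ x ∈ Ω,
      (∫⁻ y in Ω, ENNReal.ofReal (G x y) ∂volume) ≤ ENNReal.ofReal M)
    (h : ℝ → ℝ) (hpos : ∀ t : ℝ, 0 ≤ t → 0 < h t)
    (hmono : MonotoneOn h (Set.Ici (0 : ℝ)))
    (a σ₂ lam : ℝ) (ha : 0 < a) (hlam : 0 < lam)
    (hlow : a / (m * h a) ≤ lam) (hhigh : lam ≤ σ₂ / (M * h a))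
    (v : EuclideanSpace ℝ (Fin n) → ℝ)
    (hv : v = (Metric.ball (0 : EuclideanSpace ℝ (Fin n)) R).indicator fun _ => a)
    (v₁ : EuclideanSpace ℝ (Fin n) → ℝ)
    (hv₁ : ∀ x, v₁ x = lam * ∫ y in Ω, G x y * h (v y) ∂volume) :
    ∀ x ∈ Ω, 0 ≤ v x ∧ v x ≤ v₁ x ∧ v₁ x ≤ σ₂ := by
  intro x hx
  set B := Metric.ball (0 : EuclideanSpace ℝ (Fin n)) R
  have hv₀ : ∀ y, 0 ≤ v y := fun y => hv ▸ indicator_nonneg (fun _ _ => ha.le) y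
  have hva : ∀ y, v y ≤ a := fun y => hv ▸ indicator_le_self' (fun _ _ => ha.le) y
  have hha : 0 < h a := hpos a ha.le
  have hhv : Measurable (h ∘ v) := by
    classical
    rw [hv, show h ∘ B.indicator (fun _ => a) = B.piecewise (fun _ => h a) (fun _ => h 0) from
      funext fun y => comp_indicator h _]
    exact measurable_const.piecewise measurableSet_ball measurable_const
  obtain ⟨hlo, hhi⟩ := setIntegral_mul_mem_Icc_of_plateau (μ := volume) (ψ := h ∘ v)
    hΩo.measurableSet measurableSet_ball hball (hGmeas.comp measurable_prodMk_left) hhv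
    (hGnonneg x hx) (fun y => (hpos _ (hv₀ y)).le)
    (fun y => hmono (hv₀ y) ha.le (hva y))
    (fun y hy => by rw [Function.comp_apply, hv, indicator_of_mem hy]) hm hha
    (hminf x hx) (hMsup x hx)
  have hMh : 0 < M * h a := (mul_pos hm hha).trans_le (hlo.trans hhi)
  refine ⟨hv₀ x, ?_, ?_⟩
  · calc v x ≤ a := hva x
      _ ≤ lam * (m * h a) := (div_le_iff₀ (mul_pos hm hha)).mp hlow
      _ ≤ v₁ x := (hv₁ x).symm ▸ mul_le_mul_of_nonneg_left hlo hlam.le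
  · calc v₁ x ≤ lam * (M * h a) := (hv₁ x).symm ▸ mul_le_mul_of_nonneg_left hhi hlam.le
      _ ≤ σ₂ := (le_div_iff₀ hMh).mp hhigh

/-- Section 3 claim: for `λ` in the window `[a/(m h(a)), σ₂/(M h(a))]`,
the Green-operator image `v₁` of the plateau function `v = a·χ_{B_R(0)}`
satisfies `0 ≤ v ≤ v₁ ≤ σ₂` on `Ω`. -/
theorem plateau_subsolution_sandwich
    (n : ℕ) (hn : 1 ≤ n)
    (Ω : Set (EuclideanSpace ℝ (Fin n))) (hΩo : IsOpen Ω)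
    (hΩb : Bornology.IsBounded Ω)
    (R : ℝ) (hR : 0 < R) (hball : Metric.ball (0 : EuclideanSpace ℝ (Fin n)) R ⊆ Ω)
    (G : EuclideanSpace ℝ (Fin n) → EuclideanSpace ℝ (Fin n) → ℝ)
    (hGmeas : Measurable (Function.uncurry G))
    (hGnonneg : ∀ x ∈ Ω, ∀ y ∈ Ω, 0 ≤ G x y)
    (m M : ℝ) (hm : 0 < m)
    (hminf : ∀ x ∈ Ω, ENNReal.ofReal m ≤
      ∫⁻ y in Metric.ball (0 : EuclideanSpace ℝ (Fin n)) R,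
        ENNReal.ofReal (G x y) ∂volume)
    (hMsup : ∀ x ∈ Ω,
      (∫⁻ y in Ω, ENNReal.ofReal (G x y) ∂volume) ≤ ENNReal.ofReal M)
    (h : ℝ → ℝ) (hpos : ∀ t : ℝ, 0 ≤ t → 0 < h t)
    (hmono : MonotoneOn h (Set.Ici (0 : ℝ)))
    (a σ₂ lam : ℝ) (ha : 0 < a) (hσ₂ : 0 < σ₂) (hlam : 0 < lam)
    (hlow : a / (m * h a) ≤ lam) (hhigh : lam ≤ σ₂ / (M * h a))
    (v : EuclideanSpace ℝ (Fin n) → ℝ)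
    (hv : v = (Metric.ball (0 : EuclideanSpace ℝ (Fin n)) R).indicator fun _ => a)
    (v₁ : EuclideanSpace ℝ (Fin n) → ℝ)
    (hv₁ : ∀ x, v₁ x = lam * ∫ y in Ω, G x y * h (v y) ∂volume) :
    ∀ x ∈ Ω, 0 ≤ v x ∧ v x ≤ v₁ x ∧ v₁ x ≤ σ₂ :=
  plateau_subsolution_sandwich_general n Ω hΩo R hball G hGmeas hGnonneg m M hm hminf hMsup h hpos
    hmono a σ₂ lam ha hlam hlow hhigh v hv v₁ hv₁
end

section
/- Let n ≥ 1 be an integer, s ∈ (0,1), and let h : ℝⁿ → ℝ be measurable with [h]_s² < ∞. Then [h⁺]_s² < ∞ and E_s(h, h⁺) ≥ [h⁺]_s²; in particular E_s(h, h⁺) ≥ 0. -/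
open Real Set MeasureTheory

lemma key_ineq (a b : ℝ) :
    (max a 0 - max b 0) ^ 2 ≤ (a - b) * (max a 0 - max b 0) := by
  rcases le_total a 0 with ha | ha <;> rcases le_total b 0 with hb | hb <;>
    simp [max_eq_left, max_eq_right, ha, hb] <;> nlinarith

lemma div_mono_num {x y k : ℝ} (hk : 0 ≤ k) (hxy : x ≤ y) : x / k ≤ y / k := by
  rcases eq_or_lt_of_le hk with h | h
  · simp [← h]
  · exact (div_le_div_iff_of_pos_right h).2 hxy

/-- If `[h]_s² < ∞` then `[h⁺]_s² < ∞` and `E_s(h, h⁺) ≥ [h⁺]_s² ≥ 0`, where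
`E_s` is the Gagliardo bilinear form with kernel `|x-y|^{-(n+2s)}`. -/
theorem gagliardo_form_with_positive_part
    (n : ℕ) (hn : 1 ≤ n) (s : ℝ) (hs : s ∈ Set.Ioo (0 : ℝ) 1)
    (h : EuclideanSpace ℝ (Fin n) → ℝ) (hmeas : Measurable h)
    (hfin : MeasureTheory.Integrable
      (fun p : EuclideanSpace ℝ (Fin n) × EuclideanSpace ℝ (Fin n) =>
        (h p.1 - h p.2) ^ 2 / ‖p.1 - p.2‖ ^ ((n : ℝ) + 2 * s)) volume) :
    MeasureTheory.Integrable
      (fun p : EuclideanSpace ℝ (Fin n) × EuclideanSpace ℝ (Fin n) =>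
        (max (h p.1) 0 - max (h p.2) 0) ^ 2 / ‖p.1 - p.2‖ ^ ((n : ℝ) + 2 * s)) volume ∧
    (∫ p : EuclideanSpace ℝ (Fin n) × EuclideanSpace ℝ (Fin n),
        (max (h p.1) 0 - max (h p.2) 0) ^ 2 / ‖p.1 - p.2‖ ^ ((n : ℝ) + 2 * s)) ≤
      (∫ p : EuclideanSpace ℝ (Fin n) × EuclideanSpace ℝ (Fin n),
        (h p.1 - h p.2) * (max (h p.1) 0 - max (h p.2) 0) /
          ‖p.1 - p.2‖ ^ ((n : ℝ) + 2 * s)) ∧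
    (0 : ℝ) ≤
      (∫ p : EuclideanSpace ℝ (Fin n) × EuclideanSpace ℝ (Fin n),
        (h p.1 - h p.2) * (max (h p.1) 0 - max (h p.2) 0) /
          ‖p.1 - p.2‖ ^ ((n : ℝ) + 2 * s)) := by
  set r : ℝ := (n : ℝ) + 2 * s with hr
  have hk : ∀ p : EuclideanSpace ℝ (Fin n) × EuclideanSpace ℝ (Fin n),
      0 ≤ ‖p.1 - p.2‖ ^ r := fun p => Real.rpow_nonneg (norm_nonneg _) r
  have hmeasK : Measurable
      (fun p : EuclideanSpace ℝ (Fin n) × EuclideanSpace ℝ (Fin n) => ‖p.1 - p.2‖ ^ r) :=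
    (measurable_fst.sub measurable_snd).norm.pow measurable_const
  have hm1 : Measurable
      (fun p : EuclideanSpace ℝ (Fin n) × EuclideanSpace ℝ (Fin n) =>
        (max (h p.1) 0 - max (h p.2) 0) ^ 2 / ‖p.1 - p.2‖ ^ r) :=
    ((((hmeas.comp measurable_fst).max measurable_const).sub
      ((hmeas.comp measurable_snd).max measurable_const)).pow_const 2).div hmeasK
  have hm2 : Measurable
      (fun p : EuclideanSpace ℝ (Fin n) × EuclideanSpace ℝ (Fin n) =>
        (h p.1 - h p.2) * (max (h p.1) 0 - max (h p.2) 0) / ‖p.1 - p.2‖ ^ r) :=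
    (((hmeas.comp measurable_fst).sub (hmeas.comp measurable_snd)).mul
      (((hmeas.comp measurable_fst).max measurable_const).sub
      ((hmeas.comp measurable_snd).max measurable_const))).div hmeasK
  have hsq : ∀ a b : ℝ, (max a 0 - max b 0) ^ 2 ≤ (a - b) ^ 2 := by
    intro a b
    rw [← sq_abs (max a 0 - max b 0), ← sq_abs (a - b)]
    exact pow_le_pow_left₀ (abs_nonneg _) (abs_max_sub_max_le_abs a b 0) 2
  have hb1 : ∀ p : EuclideanSpace ℝ (Fin n) × EuclideanSpace ℝ (Fin n),
      ‖(max (h p.1) 0 - max (h p.2) 0) ^ 2 / ‖p.1 - p.2‖ ^ r‖ ≤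
        (h p.1 - h p.2) ^ 2 / ‖p.1 - p.2‖ ^ r := by
    intro p
    rw [Real.norm_eq_abs, abs_div, abs_of_nonneg (sq_nonneg _), abs_of_nonneg (hk p)]
    exact div_mono_num (hk p) (hsq _ _)
  have hb2 : ∀ p : EuclideanSpace ℝ (Fin n) × EuclideanSpace ℝ (Fin n),
      ‖(h p.1 - h p.2) * (max (h p.1) 0 - max (h p.2) 0) / ‖p.1 - p.2‖ ^ r‖ ≤
        (h p.1 - h p.2) ^ 2 / ‖p.1 - p.2‖ ^ r := by
    intro p
    rw [Real.norm_eq_abs, abs_div, abs_of_nonneg (hk p)]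
    refine div_mono_num (hk p) ?_
    rw [abs_mul]
    calc |h p.1 - h p.2| * |max (h p.1) 0 - max (h p.2) 0|
        ≤ |h p.1 - h p.2| * |h p.1 - h p.2| :=
          mul_le_mul_of_nonneg_left (abs_max_sub_max_le_abs _ _ 0) (abs_nonneg _)
      _ = (h p.1 - h p.2) ^ 2 := by rw [abs_mul_abs_self, sq]
  have int1 : Integrable
      (fun p : EuclideanSpace ℝ (Fin n) × EuclideanSpace ℝ (Fin n) =>
        (max (h p.1) 0 - max (h p.2) 0) ^ 2 / ‖p.1 - p.2‖ ^ r) volume :=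
    hfin.mono hm1.aestronglyMeasurable (Filter.Eventually.of_forall fun p => (hb1 p).trans (le_abs_self _))
  have int2 : Integrable
      (fun p : EuclideanSpace ℝ (Fin n) × EuclideanSpace ℝ (Fin n) =>
        (h p.1 - h p.2) * (max (h p.1) 0 - max (h p.2) 0) / ‖p.1 - p.2‖ ^ r) volume :=
    hfin.mono hm2.aestronglyMeasurable (Filter.Eventually.of_forall fun p => (hb2 p).trans (le_abs_self _))
  have hle : (∫ p : EuclideanSpace ℝ (Fin n) × EuclideanSpace ℝ (Fin n),
        (max (h p.1) 0 - max (h p.2) 0) ^ 2 / ‖p.1 - p.2‖ ^ r) ≤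
      (∫ p : EuclideanSpace ℝ (Fin n) × EuclideanSpace ℝ (Fin n),
        (h p.1 - h p.2) * (max (h p.1) 0 - max (h p.2) 0) / ‖p.1 - p.2‖ ^ r) :=
    integral_mono int1 int2 (fun p => div_mono_num (hk p) (key_ineq _ _))
  have hnn : (0 : ℝ) ≤ ∫ p : EuclideanSpace ℝ (Fin n) × EuclideanSpace ℝ (Fin n),
      (max (h p.1) 0 - max (h p.2) 0) ^ 2 / ‖p.1 - p.2‖ ^ r :=
    integral_nonneg (fun p => div_nonneg (sq_nonneg _) (hk p))
  exact ⟨int1, hle, le_trans hnn hle⟩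
end

section
/- Let n ≥ 1 be an integer, s ∈ (0,1), and let h : ℝⁿ → ℝ be measurable with [h]_s² < ∞. Then the integral ∫_{ℝⁿ}∫_{ℝⁿ} h⁻(x)h⁺(y)/|x−y|^{n+2s} dx dy is finite and E_s(h, h⁺) = [h⁺]_s² + 2 ∫_{ℝⁿ}∫_{ℝⁿ} h⁻(x)h⁺(y)/|x−y|^{n+2s} dx dy. -/
open Real Set MeasureTheory

private lemma pt_decomp (a b : ℝ) :
    (a - b) * (max a 0 - max b 0) =
      (max a 0 - max b 0) ^ 2 + max (-a) 0 * max b 0 + max (-b) 0 * max a 0 := by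
  rcases le_total a 0 with ha | ha <;> rcases le_total b 0 with hb | hb <;>
    simp [max_eq_right, max_eq_left, ha, hb, neg_nonneg.2, neg_nonpos.2] <;> ring

private lemma pt_cross (a b : ℝ) : max (-a) 0 * max b 0 ≤ (a - b) ^ 2 := by
  rcases le_total a 0 with ha | ha <;> rcases le_total b 0 with hb | hb <;>
    simp [max_eq_right, max_eq_left, ha, hb, neg_nonneg.2, neg_nonpos.2] <;> nlinarith

private lemma pt_sq (a b : ℝ) : (max a 0 - max b 0) ^ 2 ≤ (a - b) ^ 2 := by
  rcases le_total a 0 with ha | ha <;> rcases le_total b 0 with hb | hb <;>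
    simp [max_eq_right, max_eq_left, ha, hb] <;> nlinarith

/-- Decomposition identity from Claim (1) of Section 6:
`E_s(h, h⁺) = [h⁺]_s² + 2 ∫∫ h⁻(x) h⁺(y) |x-y|^{-(n+2s)} dx dy`,
the latter integral being finite. -/
theorem gagliardo_form_positive_part_decomposition
    (n : ℕ) (hn : 1 ≤ n) (s : ℝ) (hs : s ∈ Set.Ioo (0 : ℝ) 1)
    (h : EuclideanSpace ℝ (Fin n) → ℝ) (hmeas : Measurable h)
    (hfin : MeasureTheory.Integrable
      (fun p : EuclideanSpace ℝ (Fin n) × EuclideanSpace ℝ (Fin n) =>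
        (h p.1 - h p.2) ^ 2 / ‖p.1 - p.2‖ ^ ((n : ℝ) + 2 * s)) volume) :
    MeasureTheory.Integrable
      (fun p : EuclideanSpace ℝ (Fin n) × EuclideanSpace ℝ (Fin n) =>
        max (-h p.1) 0 * max (h p.2) 0 / ‖p.1 - p.2‖ ^ ((n : ℝ) + 2 * s)) volume ∧
    (∫ p : EuclideanSpace ℝ (Fin n) × EuclideanSpace ℝ (Fin n),
        (h p.1 - h p.2) * (max (h p.1) 0 - max (h p.2) 0) /
          ‖p.1 - p.2‖ ^ ((n : ℝ) + 2 * s)) =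
      (∫ p : EuclideanSpace ℝ (Fin n) × EuclideanSpace ℝ (Fin n),
        (max (h p.1) 0 - max (h p.2) 0) ^ 2 / ‖p.1 - p.2‖ ^ ((n : ℝ) + 2 * s)) +
      2 * (∫ p : EuclideanSpace ℝ (Fin n) × EuclideanSpace ℝ (Fin n),
        max (-h p.1) 0 * max (h p.2) 0 / ‖p.1 - p.2‖ ^ ((n : ℝ) + 2 * s)) := by
  have _dummy : True := trivial
  set α : ℝ := (n : ℝ) + 2 * s with hα
  have hα0 : (0 : ℝ) ≤ α := by
    have := hs.1
    positivity
  have hden : ∀ p : EuclideanSpace ℝ (Fin n) × EuclideanSpace ℝ (Fin n), (0 : ℝ) ≤ ‖p.1 - p.2‖ ^ α :=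
    fun p => Real.rpow_nonneg (norm_nonneg _) _
  have hmd : Measurable fun p : EuclideanSpace ℝ (Fin n) × EuclideanSpace ℝ (Fin n) => ‖p.1 - p.2‖ ^ α :=
    ((continuous_fst.sub continuous_snd).norm.rpow_const fun _ => Or.inr hα0).measurable
  -- generic integrability criterion
  have key : ∀ f : EuclideanSpace ℝ (Fin n) × EuclideanSpace ℝ (Fin n) → ℝ, Measurable f → (∀ p, 0 ≤ f p) →
      (∀ p, f p ≤ (h p.1 - h p.2) ^ 2) →
      Integrable (fun p => f p / ‖p.1 - p.2‖ ^ α) volume := by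
    intro f hf h0 hle
    refine hfin.mono' (hf.div hmd).aestronglyMeasurable (ae_of_all _ fun p => ?_)
    rw [Real.norm_of_nonneg (div_nonneg (h0 p) (hden p))]
    exact div_le_div_of_nonneg_right (hle p) (hden p)
  have hm1 : Measurable fun p : EuclideanSpace ℝ (Fin n) × EuclideanSpace ℝ (Fin n) => max (-h p.1) 0 * max (h p.2) 0 :=
    (((hmeas.comp measurable_fst).neg).max measurable_const).mul
      ((hmeas.comp measurable_snd).max measurable_const)
  have hm3 : Measurable fun p : EuclideanSpace ℝ (Fin n) × EuclideanSpace ℝ (Fin n) => max (-h p.2) 0 * max (h p.1) 0 :=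
    (((hmeas.comp measurable_snd).neg).max measurable_const).mul
      ((hmeas.comp measurable_fst).max measurable_const)
  have hm2 : Measurable fun p : EuclideanSpace ℝ (Fin n) × EuclideanSpace ℝ (Fin n) => (max (h p.1) 0 - max (h p.2) 0) ^ 2 :=
    (((hmeas.comp measurable_fst).max measurable_const).sub
      ((hmeas.comp measurable_snd).max measurable_const)).pow_const 2
  have int1 : Integrable (fun p : EuclideanSpace ℝ (Fin n) × EuclideanSpace ℝ (Fin n) => max (-h p.1) 0 * max (h p.2) 0 / ‖p.1 - p.2‖ ^ α)
      volume :=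
    key _ hm1 (fun p => mul_nonneg (le_max_right _ _) (le_max_right _ _))
      (fun p => pt_cross _ _)
  have int3 : Integrable (fun p : EuclideanSpace ℝ (Fin n) × EuclideanSpace ℝ (Fin n) => max (-h p.2) 0 * max (h p.1) 0 / ‖p.1 - p.2‖ ^ α)
      volume :=
    key _ hm3 (fun p => mul_nonneg (le_max_right _ _) (le_max_right _ _))
      (fun p => by have := pt_cross (h p.2) (h p.1); nlinarith)
  have int2 : Integrable (fun p : EuclideanSpace ℝ (Fin n) × EuclideanSpace ℝ (Fin n) => (max (h p.1) 0 - max (h p.2) 0) ^ 2 / ‖p.1 - p.2‖ ^ α)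
      volume :=
    key _ hm2 (fun p => sq_nonneg _) (fun p => pt_sq _ _)
  refine ⟨int1, ?_⟩
  -- the swapped cross integral equals the straight one
  have hswap : (∫ p : EuclideanSpace ℝ (Fin n) × EuclideanSpace ℝ (Fin n), max (-h p.2) 0 * max (h p.1) 0 / ‖p.1 - p.2‖ ^ α) =
      ∫ p : EuclideanSpace ℝ (Fin n) × EuclideanSpace ℝ (Fin n), max (-h p.1) 0 * max (h p.2) 0 / ‖p.1 - p.2‖ ^ α := by
    have : ∀ p : EuclideanSpace ℝ (Fin n) × EuclideanSpace ℝ (Fin n), max (-h p.2) 0 * max (h p.1) 0 / ‖p.1 - p.2‖ ^ α =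
        (fun q : EuclideanSpace ℝ (Fin n) × EuclideanSpace ℝ (Fin n) => max (-h q.1) 0 * max (h q.2) 0 / ‖q.1 - q.2‖ ^ α) p.swap := by
      intro p
      simp [Prod.swap, norm_sub_rev p.1 p.2]
    rw [integral_congr_ae (ae_of_all _ this), Measure.volume_eq_prod]
    exact integral_prod_swap (fun q : EuclideanSpace ℝ (Fin n) × EuclideanSpace ℝ (Fin n) => max (-h q.1) 0 * max (h q.2) 0 / ‖q.1 - q.2‖ ^ α)
  have hpt : ∀ p : EuclideanSpace ℝ (Fin n) × EuclideanSpace ℝ (Fin n),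
      (h p.1 - h p.2) * (max (h p.1) 0 - max (h p.2) 0) / ‖p.1 - p.2‖ ^ α =
        (max (h p.1) 0 - max (h p.2) 0) ^ 2 / ‖p.1 - p.2‖ ^ α +
        max (-h p.1) 0 * max (h p.2) 0 / ‖p.1 - p.2‖ ^ α +
        max (-h p.2) 0 * max (h p.1) 0 / ‖p.1 - p.2‖ ^ α := by
    intro p
    rw [pt_decomp, add_div, add_div]
  calc (∫ p : EuclideanSpace ℝ (Fin n) × EuclideanSpace ℝ (Fin n), (h p.1 - h p.2) * (max (h p.1) 0 - max (h p.2) 0) / ‖p.1 - p.2‖ ^ α)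
      = ∫ p : EuclideanSpace ℝ (Fin n) × EuclideanSpace ℝ (Fin n), ((max (h p.1) 0 - max (h p.2) 0) ^ 2 / ‖p.1 - p.2‖ ^ α +
          max (-h p.1) 0 * max (h p.2) 0 / ‖p.1 - p.2‖ ^ α +
          max (-h p.2) 0 * max (h p.1) 0 / ‖p.1 - p.2‖ ^ α) :=
        integral_congr_ae (ae_of_all _ hpt)
    _ = (∫ p : EuclideanSpace ℝ (Fin n) × EuclideanSpace ℝ (Fin n), (max (h p.1) 0 - max (h p.2) 0) ^ 2 / ‖p.1 - p.2‖ ^ α) +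
          (∫ p : EuclideanSpace ℝ (Fin n) × EuclideanSpace ℝ (Fin n), max (-h p.1) 0 * max (h p.2) 0 / ‖p.1 - p.2‖ ^ α) +
          (∫ p : EuclideanSpace ℝ (Fin n) × EuclideanSpace ℝ (Fin n), max (-h p.2) 0 * max (h p.1) 0 / ‖p.1 - p.2‖ ^ α) := by
        have int21 : Integrable (fun p : EuclideanSpace ℝ (Fin n) × EuclideanSpace ℝ (Fin n) =>
            (max (h p.1) 0 - max (h p.2) 0) ^ 2 / ‖p.1 - p.2‖ ^ α +
            max (-h p.1) 0 * max (h p.2) 0 / ‖p.1 - p.2‖ ^ α) volume := int2.add int1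
        rw [integral_add int21 int3, integral_add int2 int1]
    _ = (∫ p : EuclideanSpace ℝ (Fin n) × EuclideanSpace ℝ (Fin n), (max (h p.1) 0 - max (h p.2) 0) ^ 2 / ‖p.1 - p.2‖ ^ α) +
          2 * ∫ p : EuclideanSpace ℝ (Fin n) × EuclideanSpace ℝ (Fin n), max (-h p.1) 0 * max (h p.2) 0 / ‖p.1 - p.2‖ ^ α := by
        rw [hswap]; ring
end
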